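/- arXiv:1204.3312 — 4 statements merged into one kernel-verified Lean document; each statement's English description precedes it below -/
import Mathlib

section
/- Let V be a vector space over a field k with a bilinear bracket [,] and a central element 1 (i.e. [1,v] = [v,1] = 0 for all v). Define σ : V ⊗ V → V ⊗ V by σ(v ⊗ w) = w ⊗ v + 1 ⊗ [v,w]. Then σ satisfies the Yang–Baxter equation on V^⊗3 if and only if the bracket satisfies the (right) Leibniz identity [v,[w,u]] = [[v,w],u] − [[v,u],w] for all v, w, u ∈ V, provided there exists a linear map γ : V → k with γ(1) = 1. -/
/-! Both sides of the braid relation send `v ⊗ w ⊗ u` to `u ⊗ w ⊗ v` plus terms with a factor `1`;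
by centrality of `1` all of them cancel except `1 ⊗ 1 ⊗ [[v,w],u]` on the left and
`1 ⊗ 1 ⊗ ([[v,u],w] + [v,[w,u]])` on the right, so the Yang–Baxter defect is `1 ⊗ 1 ⊗` the
Leibniz defect. A functional `γ` with `γ(1) = 1` makes `x ↦ 1 ⊗ x` injective, so this vanishes
exactly when the Leibniz identity holds. -/

open TensorProduct

variable {k V : Type*} [Field k] [AddCommGroup V] [Module k V]

/-- `σ ⊗ id` as an endomorphism of `V ⊗ (V ⊗ V)`. -/
noncomputable def sigma1 (σ : V ⊗[k] V →ₗ[k] V ⊗[k] V) :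
    V ⊗[k] (V ⊗[k] V) →ₗ[k] V ⊗[k] (V ⊗[k] V) :=
  (TensorProduct.assoc k V V V).toLinearMap ∘ₗ (LinearMap.rTensor V σ) ∘ₗ
    (TensorProduct.assoc k V V V).symm.toLinearMap

/-- `id ⊗ σ` as an endomorphism of `V ⊗ (V ⊗ V)`. -/
noncomputable def sigma2 (σ : V ⊗[k] V →ₗ[k] V ⊗[k] V) :
    V ⊗[k] (V ⊗[k] V) →ₗ[k] V ⊗[k] (V ⊗[k] V) :=
  LinearMap.lTensor V σ

/-- The Yang–Baxter equation for `σ : V ⊗ V → V ⊗ V`. -/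
def YangBaxter (σ : V ⊗[k] V →ₗ[k] V ⊗[k] V) : Prop :=
  sigma1 σ ∘ₗ sigma2 σ ∘ₗ sigma1 σ = sigma2 σ ∘ₗ sigma1 σ ∘ₗ sigma2 σ

/-- The Leibniz braiding `σ(v ⊗ w) = w ⊗ v + 1 ⊗ [v,w]`. -/
noncomputable def leibnizBraiding (br : V →ₗ[k] V →ₗ[k] V) (one : V) :
    V ⊗[k] V →ₗ[k] V ⊗[k] V :=
  (TensorProduct.comm k V V).toLinearMap +
    (TensorProduct.mk k V V one) ∘ₗ (TensorProduct.lift br)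

theorem TensorProduct.mk_injective_of_apply_eq_one {R M N : Type*} [CommSemiring R]
    [AddCommMonoid M] [AddCommMonoid N] [Module R M] [Module R N]
    (f : M →ₗ[R] R) {m : M} (hm : f m = 1) : Function.Injective (TensorProduct.mk R M N m) :=
  Function.LeftInverse.injective (g := TensorProduct.lid R N ∘ₗ LinearMap.rTensor N f)
    fun n => by simp [hm]

section LeibnizBraiding

variable (br : V →ₗ[k] V →ₗ[k] V) (one : V)

theorem leibnizBraiding_tmul (v w : V) :
    leibnizBraiding br one (v ⊗ₜ[k] w) = w ⊗ₜ[k] v + one ⊗ₜ[k] br v w := by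
  simp [leibnizBraiding]

theorem sigma1_leibnizBraiding_tmul (v w u : V) :
    sigma1 (leibnizBraiding br one) (v ⊗ₜ[k] (w ⊗ₜ[k] u)) =
      w ⊗ₜ[k] (v ⊗ₜ[k] u) + one ⊗ₜ[k] (br v w ⊗ₜ[k] u) := by
  simp [sigma1, leibnizBraiding_tmul, add_tmul]

theorem sigma2_leibnizBraiding_tmul (v w u : V) :
    sigma2 (leibnizBraiding br one) (v ⊗ₜ[k] (w ⊗ₜ[k] u)) =
      v ⊗ₜ[k] (u ⊗ₜ[k] w) + v ⊗ₜ[k] (one ⊗ₜ[k] br w u) := by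
  simp [sigma2, leibnizBraiding_tmul, tmul_add]

variable {br one}

theorem leibnizBraiding_braid_sub_tmul (hl : ∀ v, br one v = 0) (hr : ∀ v, br v one = 0)
    (v w u : V) :
    let σ := leibnizBraiding br one
    (sigma1 σ ∘ₗ sigma2 σ ∘ₗ sigma1 σ) (v ⊗ₜ[k] (w ⊗ₜ[k] u)) -
        (sigma2 σ ∘ₗ sigma1 σ ∘ₗ sigma2 σ) (v ⊗ₜ[k] (w ⊗ₜ[k] u)) =
      one ⊗ₜ[k] (one ⊗ₜ[k] (br (br v w) u - br (br v u) w - br v (br w u))) := by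
  simp only [LinearMap.comp_apply, sigma1_leibnizBraiding_tmul, sigma2_leibnizBraiding_tmul,
    map_add, hl, hr, tmul_zero, zero_tmul, add_zero, tmul_sub]
  abel

theorem yangBaxter_leibnizBraiding_iff (hl : ∀ v, br one v = 0) (hr : ∀ v, br v one = 0) :
    YangBaxter (leibnizBraiding br one) ↔ ∀ v w u : V,
      one ⊗ₜ[k] (one ⊗ₜ[k] (br (br v w) u - br (br v u) w - br v (br w u))) = 0 := by
  simp only [← leibnizBraiding_braid_sub_tmul hl hr, sub_eq_zero, YangBaxter]
  exact ⟨fun h v w u => by rw [h], TensorProduct.ext_threefold'⟩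

end LeibnizBraiding

/-- for a bilinear bracket with central element `1` and a linear map
`γ : V → k` with `γ(1) = 1`, the map `σ(v ⊗ w) = w ⊗ v + 1 ⊗ [v,w]` satisfies the
Yang–Baxter equation iff the bracket satisfies the (right) Leibniz identity. -/
theorem leibniz_braiding_yang_baxter_iff_leibniz
    (br : V →ₗ[k] V →ₗ[k] V) (one : V)
    (hcentral_l : ∀ v : V, br one v = 0)
    (hcentral_r : ∀ v : V, br v one = 0)
    (γ : V →ₗ[k] k) (hγ : γ one = 1) :
    YangBaxter (leibnizBraiding br one) ↔
      ∀ v w u : V, br v (br w u) = br (br v w) u - br (br v u) w := by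
  have hinj (x : V) : one ⊗ₜ[k] (one ⊗ₜ[k] x) = 0 ↔ x = 0 :=
    ((TensorProduct.mk_injective_of_apply_eq_one γ hγ).comp
      (TensorProduct.mk_injective_of_apply_eq_one γ hγ)).eq_iff' (by simp)
  rw [yangBaxter_leibnizBraiding_iff hcentral_l hcentral_r]
  refine forall₃_congr fun v w u => ?_
  rw [hinj, sub_eq_zero, eq_comm]
end

section
/- Let (S, ◁) be a shelf. The two families of maps on the free module on S^n, d_{n;i}(a₁,…,aₙ) = (a₁◁aᵢ,…,a_{i−1}◁aᵢ,a_{i+1},…,aₙ) and d'_{n;i}(a₁,…,aₙ) = (a₁,…,â_i,…,aₙ) (omitting aᵢ), satisfy the mixed pre-bisimplicial identities d_i d'_j = d'_{j−1} d_i and d'_i d_j = d_{j−1} d'_i for all 1 ≤ i < j ≤ n, as well as d_i d_j = d_{j−1} d_i and d'_i d'_j = d'_{j−1} d'_i for i < j. -/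
variable {k : Type*} [CommRing k] {S : Type*}

/-- The `i`-th face on tuples: `(a₁,…,a_{n+1}) ↦ (a₁◁aᵢ,…,a_{i−1}◁aᵢ,a_{i+1},…,a_{n+1})`. -/
def shelfFaceTuple (op : S → S → S) {n : ℕ} (i : Fin (n+1)) (a : Fin (n+1) → S) :
    Fin n → S :=
  fun p => if (p : ℕ) < (i : ℕ) then op (a p.castSucc) (a i) else a p.succ

/-- The `i`-th deleting face on tuples: `(a₁,…,a_{n+1}) ↦ (a₁,…,âᵢ,…,a_{n+1})`. -/
def delFaceTuple {n : ℕ} (i : Fin (n+1)) (a : Fin (n+1) → S) : Fin n → S :=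
  fun p => if (p : ℕ) < (i : ℕ) then a p.castSucc else a p.succ

variable (k) in
/-- The linearized face `d_{n+1;i}`. -/
noncomputable def fd (op : S → S → S) (n : ℕ) (i : Fin (n+1)) :
    ((Fin (n+1) → S) →₀ k) →ₗ[k] ((Fin n → S) →₀ k) :=
  Finsupp.lmapDomain k k (shelfFaceTuple op i)

variable (k S) in
/-- The linearized deleting face `d'_{n+1;i}`. -/
noncomputable def fd' (n : ℕ) (i : Fin (n+1)) :
    ((Fin (n+1) → S) →₀ k) →ₗ[k] ((Fin n → S) →₀ k) :=
  Finsupp.lmapDomain k k (delFaceTuple i)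

/-! Each identity already holds between the maps on tuples, and `Finsupp.lmapDomain` is
functorial. On tuples everything is index bookkeeping, except for `dᵢdⱼ` in a coordinate
`p < i`, where the two sides are `(aₚ ◁ aⱼ) ◁ (aᵢ ◁ aⱼ)` and `(aₚ ◁ aᵢ) ◁ aⱼ`: this is
self-distributivity. -/

theorem Finsupp.lmapDomain_comp_eq_of_comp_eq {R M α β β' γ : Type*} [Semiring R]
    [AddCommMonoid M] [Module R M] {f : β → γ} {g : α → β} {f' : β' → γ} {g' : α → β'}
    (h : f ∘ g = f' ∘ g') :
    lmapDomain M R f ∘ₗ lmapDomain M R g = lmapDomain M R f' ∘ₗ lmapDomain M R g' := by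
  rw [← lmapDomain_comp, ← lmapDomain_comp, h]

section FaceTuples

variable {m : ℕ} (i : Fin (m+1)) (j : Fin (m+2))

theorem shelfFaceTuple_comp_shelfFaceTuple (op : S → S → S)
    (selfdistr : ∀ a b c : S, op (op a b) c = op (op a c) (op b c)) (hij : (i : ℕ) < j) :
    shelfFaceTuple op i ∘ shelfFaceTuple op j =
      shelfFaceTuple op ⟨(j : ℕ) - 1, by omega⟩ ∘ shelfFaceTuple op i.castSucc := by
  have hj : (⟨(j : ℕ) - 1, by omega⟩ : Fin (m+1)).succ = j := Fin.ext (by simp; omega)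
  funext a p
  simp only [Function.comp_apply, shelfFaceTuple, Fin.val_castSucc, Fin.val_succ, hj]
  split_ifs <;> first | omega | exact (selfdistr _ _ _).symm | rfl

theorem delFaceTuple_comp_delFaceTuple (hij : (i : ℕ) < j) :
    delFaceTuple i ∘ delFaceTuple j =
      delFaceTuple ⟨(j : ℕ) - 1, by omega⟩ ∘ delFaceTuple (S := S) i.castSucc := by
  funext a p
  simp only [Function.comp_apply, delFaceTuple, Fin.val_castSucc, Fin.val_succ]
  grind

theorem shelfFaceTuple_comp_delFaceTuple (op : S → S → S) (hij : (i : ℕ) < j) :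
    shelfFaceTuple op i ∘ delFaceTuple j =
      delFaceTuple ⟨(j : ℕ) - 1, by omega⟩ ∘ shelfFaceTuple op i.castSucc := by
  funext a p
  simp only [Function.comp_apply, shelfFaceTuple, delFaceTuple, Fin.val_castSucc, Fin.val_succ]
  grind

theorem delFaceTuple_comp_shelfFaceTuple (op : S → S → S) (hij : (i : ℕ) < j) :
    delFaceTuple i ∘ shelfFaceTuple op j =
      shelfFaceTuple op ⟨(j : ℕ) - 1, by omega⟩ ∘ delFaceTuple i.castSucc := by
  funext a p
  simp only [Function.comp_apply, shelfFaceTuple, delFaceTuple, Fin.val_castSucc, Fin.val_succ]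
  grind

end FaceTuples

/-- for a shelf `(S, ◁)`, the faces `d_{n;i}` and `d'_{n;i}` satisfy the
pre-bisimplicial identities `dᵢdⱼ = d_{j−1}dᵢ`, `d'ᵢd'ⱼ = d'_{j−1}d'ᵢ`,
`dᵢd'ⱼ = d'_{j−1}dᵢ` and `d'ᵢdⱼ = d_{j−1}d'ᵢ` for `1 ≤ i < j ≤ n` (0-indexed below). -/
theorem shelf_faces_pre_bisimplicial
    (op : S → S → S)
    (selfdistr : ∀ a b c : S, op (op a b) c = op (op a c) (op b c)) :
    ∀ (m : ℕ) (i : Fin (m+1)) (j : Fin (m+2)), (i : ℕ) < (j : ℕ) →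
      (fd k op m i ∘ₗ fd k op (m+1) j =
        fd k op m ⟨(j : ℕ) - 1, by omega⟩ ∘ₗ fd k op (m+1) i.castSucc) ∧
      (fd' k S m i ∘ₗ fd' k S (m+1) j =
        fd' k S m ⟨(j : ℕ) - 1, by omega⟩ ∘ₗ fd' k S (m+1) i.castSucc) ∧
      (fd k op m i ∘ₗ fd' k S (m+1) j =
        fd' k S m ⟨(j : ℕ) - 1, by omega⟩ ∘ₗ fd k op (m+1) i.castSucc) ∧
      (fd' k S m i ∘ₗ fd k op (m+1) j =
        fd k op m ⟨(j : ℕ) - 1, by omega⟩ ∘ₗ fd' k S (m+1) i.castSucc) := by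
  intro m i j hij
  exact ⟨Finsupp.lmapDomain_comp_eq_of_comp_eq
      (shelfFaceTuple_comp_shelfFaceTuple i j op selfdistr hij),
    Finsupp.lmapDomain_comp_eq_of_comp_eq (delFaceTuple_comp_delFaceTuple i j hij),
    Finsupp.lmapDomain_comp_eq_of_comp_eq (shelfFaceTuple_comp_delFaceTuple i j op hij),
    Finsupp.lmapDomain_comp_eq_of_comp_eq (delFaceTuple_comp_shelfFaceTuple i j op hij)⟩
end

section
/- Let (S, ◁) be a rack, i.e. a shelf such that for every b ∈ S the map a ↦ a ◁ b is bijective. Then the shelf complex (kS^⊗n, d) with d(a₁,…,aₙ) = Σ_{i=1}^n (−1)^{i−1}(a₁◁aᵢ,…,a_{i−1}◁aᵢ,a_{i+1},…,aₙ) is acyclic in positive degrees: fixing any b ∈ S, the map h(a₁,…,aₙ) = (−1)^n (a₁,…,aₙ,b) composed with the inverse diagonal map π_b^{−1}(a₁,…,aₙ) = (a₁ ◁̃ b, …, aₙ ◁̃ b) provides a contracting homotopy, where ◁̃ denotes the inverse of right translation by b. -/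
/-!
Write `g = (· ◁̃ b)`. Since right translation by `b` is injective with inverse `g`,
self-distributivity makes `g` a shelf endomorphism, so `g` commutes with every face.
For `j ≤ n` the `j`-th face of `g (a₁, …, a_{n+1}, b)` is therefore `g` applied to
`(dⱼ a, b)`, and these terms of `d h` cancel those of `h d` because their signs differ
by `(−1)^{n+1}` versus `(−1)^n`. The remaining last face is
`(g a₁ ◁ g b, …) = (g (a₁ ◁ b), …) = a`. Hence `h d + d h = id`, and every cycle
`x = d (h x)` is a boundary.
-/

variable {k : Type*} [CommRing k] {S : Type*}

variable (k) in
/-- The one-term distributive differential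
`d(a₁,…,aₙ) = Σᵢ (−1)^{i−1}(a₁◁aᵢ,…,a_{i−1}◁aᵢ,a_{i+1},…,aₙ)`. -/
noncomputable def shelfD (op : S → S → S) (n : ℕ) :
    ((Fin (n+1) → S) →₀ k) →ₗ[k] ((Fin n → S) →₀ k) :=
  ∑ i : Fin (n+1), ((-1 : k)^(i : ℕ)) • Finsupp.lmapDomain k k (shelfFaceTuple op i)

variable (k) in
/-- The homotopy `(a₁,…,aₙ) ↦ (−1)ⁿ (a₁ ◁̃ b, …, aₙ ◁̃ b, b ◁̃ b)`, i.e. right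
concatenation with `b` followed by the inverse diagonal map `π_b^{−1}`. -/
noncomputable def rackH (invop : S → S → S) (b : S) (n : ℕ) :
    ((Fin n → S) →₀ k) →ₗ[k] ((Fin (n+1) → S) →₀ k) :=
  ((-1 : k)^n) • Finsupp.lmapDomain k k
    (fun (a : Fin n → S) (p : Fin (n+1)) =>
      invop (if h : (p : ℕ) < n then a ⟨p, h⟩ else b) b)

theorem shelfFaceTuple_comp {T : Type*} {op : S → S → S} {op' : T → T → T} {f : S → T}
    (hf : ∀ x y, f (op x y) = op' (f x) (f y)) {n : ℕ} (i : Fin (n+1)) (a : Fin (n+1) → S) :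
    shelfFaceTuple op' i (f ∘ a) = f ∘ shelfFaceTuple op i a := by
  funext p
  simp only [shelfFaceTuple, Function.comp_apply]
  split_ifs <;> simp [hf]

theorem shelfFaceTuple_castSucc_snoc (op : S → S → S) {n : ℕ} (j : Fin (n+1))
    (a : Fin (n+1) → S) (c : S) :
    shelfFaceTuple op j.castSucc (Fin.snoc a c : Fin (n+2) → S)
      = Fin.snoc (shelfFaceTuple op j a) c := by
  funext p
  refine Fin.lastCases ?_ (fun q => ?_) p
  · have : ¬ (n : ℕ) < j := by omega
    simp [shelfFaceTuple, this]
  · simp only [shelfFaceTuple, Fin.snoc_castSucc, Fin.val_castSucc]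
    split_ifs
    · rfl
    · rw [Fin.succ_castSucc, Fin.snoc_castSucc]

theorem shelfFaceTuple_last_snoc (op : S → S → S) {n : ℕ} (a : Fin n → S) (c : S) :
    shelfFaceTuple op (Fin.last n) (Fin.snoc a c : Fin (n+1) → S) = fun p => op (a p) c := by
  funext p
  simp [shelfFaceTuple]

theorem invop_op_distrib {op invop : S → S → S}
    (selfdistr : ∀ a b c : S, op (op a b) c = op (op a c) (op b c))
    (hinv₁ : ∀ a b : S, invop (op a b) b = a) (hinv₂ : ∀ a b : S, op (invop a b) b = a)
    (x y b : S) : invop (op x y) b = op (invop x b) (invop y b) := by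
  apply Function.LeftInverse.injective (g := (invop · b)) (fun a => hinv₁ a b)
  dsimp only
  rw [hinv₂, selfdistr, hinv₂, hinv₂]

theorem shelfD_single (op : S → S → S) (n : ℕ) (a : Fin (n+1) → S) (v : k) :
    shelfD k op n (Finsupp.single a v)
      = ∑ i : Fin (n+1), (-1 : k)^(i : ℕ) • Finsupp.single (shelfFaceTuple op i a) v := by
  simp [shelfD, Finsupp.mapDomain_single]

theorem rackH_single (invop : S → S → S) (b : S) (n : ℕ) (a : Fin n → S) (v : k) :
    rackH k invop b n (Finsupp.single a v)
      = (-1 : k)^n • Finsupp.single ((invop · b) ∘ (Fin.snoc a b : Fin (n+1) → S)) v := by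
  simp only [rackH, LinearMap.smul_apply, Finsupp.lmapDomain_apply, Finsupp.mapDomain_single]
  -- `Fin.snoc` into a constant family unfolds to the `dite` in `rackH`
  rfl

theorem rackH_shelfD_add_shelfD_rackH_single {op invop : S → S → S} {b : S}
    (hdistrib : ∀ x y : S, invop (op x y) b = op (invop x b) (invop y b))
    (hlast : ∀ x : S, invop (op x b) b = x) (n : ℕ) (a : Fin (n+1) → S) (v : k) :
    rackH k invop b n (shelfD k op n (Finsupp.single a v))
      + shelfD k op (n+1) (rackH k invop b (n+1) (Finsupp.single a v)) = Finsupp.single a v := by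
  have hface (j : Fin (n+1)) : shelfFaceTuple op j.castSucc ((invop · b) ∘ Fin.snoc a b)
      = (invop · b) ∘ (Fin.snoc (shelfFaceTuple op j a) b : Fin (n+1) → S) := by
    rw [shelfFaceTuple_comp hdistrib, shelfFaceTuple_castSucc_snoc]
  have hface_last : shelfFaceTuple op (Fin.last (n+1)) ((invop · b) ∘ Fin.snoc a b) = a := by
    rw [shelfFaceTuple_comp hdistrib, shelfFaceTuple_last_snoc]
    exact funext fun p => hlast (a p)
  rw [add_comm (rackH k invop b n _), rackH_single, map_smul, shelfD_single,
    Fin.sum_univ_castSucc, shelfD_single, map_sum]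
  simp only [hface, hface_last, map_smul, rackH_single, Fin.val_castSucc, Fin.val_last, smul_add,
    Finset.smul_sum, smul_smul, ← pow_add]
  have hsign (j : ℕ) : (-1 : k) ^ (n + 1 + j) + (-1) ^ (j + n) = 0 := by ring
  rw [Even.neg_one_pow ⟨n + 1, rfl⟩, one_smul, add_right_comm, ← Finset.sum_add_distrib,
    Finset.sum_eq_zero fun j _ => by rw [← add_smul, hsign, zero_smul], zero_add]

theorem rackH_comp_shelfD_add_shelfD_comp_rackH {op invop : S → S → S} {b : S}
    (hdistrib : ∀ x y : S, invop (op x y) b = op (invop x b) (invop y b))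
    (hlast : ∀ x : S, invop (op x b) b = x) (n : ℕ) :
    rackH k invop b n ∘ₗ shelfD k op n + shelfD k op (n+1) ∘ₗ rackH k invop b (n+1) =
      LinearMap.id :=
  Finsupp.lhom_ext fun a v => by
    simpa only [LinearMap.add_apply, LinearMap.comp_apply, LinearMap.id_apply] using
      rackH_shelfD_add_shelfD_rackH_single hdistrib hlast n a v

/-- for a rack `(S, ◁, ◁̃)` and `b ∈ S`, the shelf complex is acyclic in
positive degrees: the composite of right concatenation with `b` (with sign `(−1)ⁿ`)
and the inverse diagonal map `π_b^{−1}` is a contracting homotopy. -/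
theorem rack_shelf_complex_acyclic
    (op invop : S → S → S)
    (selfdistr : ∀ a b c : S, op (op a b) c = op (op a c) (op b c))
    (hinv₁ : ∀ a b : S, invop (op a b) b = a)
    (hinv₂ : ∀ a b : S, op (invop a b) b = a)
    (b : S) :
    ∀ n : ℕ,
      (rackH k invop b n ∘ₗ shelfD k op n + shelfD k op (n+1) ∘ₗ rackH k invop b (n+1) =
        LinearMap.id) ∧
      (∀ x : (Fin (n+1) → S) →₀ k, shelfD k op n x = 0 →
        ∃ y : (Fin (n+2) → S) →₀ k, shelfD k op (n+1) y = x) := by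
  intro n
  have homotopy := rackH_comp_shelfD_add_shelfD_comp_rackH (k := k)
    (invop_op_distrib selfdistr hinv₁ hinv₂ · · b) (hinv₁ · b) n
  refine ⟨homotopy, fun x hx => ⟨rackH k invop b (n+1) x, ?_⟩⟩
  simpa only [LinearMap.add_apply, LinearMap.comp_apply, hx, map_zero, zero_add,
    LinearMap.id_apply] using LinearMap.congr_fun homotopy x
end

section
/- Let (S, ◁) be a shelf possessing an element a satisfying a ◁ b = a for all b ∈ S. Then the one-term distributive complex (kS^⊗n, d) with d(a₁,…,aₙ) = Σ_{i=1}^n (−1)^{i−1}(a₁◁aᵢ,…,a_{i−1}◁aᵢ,a_{i+1},…,aₙ) is acyclic in positive degrees. -/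
/-!
Prepending the fixed element, `h(a₁,…,aₙ) = (a, a₁,…,aₙ)`, is a contracting homotopy:
`d h + h d = id`. The face `d₀` deletes the new first entry, and since `a ◁ b = a` every
later face `dᵢ₊₁` of `(a, t)` is `(a, dᵢ t)`, with the opposite sign. Hence a cycle `x` is the
boundary of `h x`.
-/

variable {k : Type*} [CommRing k] {S : Type*}

theorem shelfD_apply (op : S → S → S) (n : ℕ) (x : (Fin (n+1) → S) →₀ k) :
    shelfD k op n x =
      ∑ i : Fin (n+1), ((-1 : k)^(i : ℕ)) • Finsupp.mapDomain (shelfFaceTuple op i) x := by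
  simp [shelfD, Finsupp.lmapDomain_apply]

section ContractingHomotopy

variable {op : S → S → S} {a : S} {n : ℕ}

theorem shelfFaceTuple_zero_cons (t : Fin (n+1) → S) :
    shelfFaceTuple op 0 (Fin.cons a t : Fin (n+2) → S) = t := by
  funext p
  simp [shelfFaceTuple]

theorem shelfFaceTuple_succ_cons (hfix : ∀ b, op a b = a) (i : Fin (n+1)) (t : Fin (n+1) → S) :
    shelfFaceTuple op i.succ (Fin.cons a t) = Fin.cons a (shelfFaceTuple op i t) := by
  funext p
  cases p using Fin.cases <;> simp [shelfFaceTuple, hfix]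

theorem mapDomain_shelfFaceTuple_zero_cons (x : (Fin (n+1) → S) →₀ k) :
    Finsupp.mapDomain (shelfFaceTuple op 0) (Finsupp.mapDomain (Fin.cons a) x) = x := by
  rw [← Finsupp.mapDomain_comp, Function.comp_def]
  simp only [shelfFaceTuple_zero_cons]
  exact Finsupp.mapDomain_id

theorem mapDomain_shelfFaceTuple_succ_cons (hfix : ∀ b, op a b = a) (i : Fin (n+1))
    (x : (Fin (n+1) → S) →₀ k) :
    Finsupp.mapDomain (shelfFaceTuple op i.succ) (Finsupp.mapDomain (Fin.cons a) x) =
      Finsupp.mapDomain (Fin.cons a) (Finsupp.mapDomain (shelfFaceTuple op i) x) := by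
  simp only [← Finsupp.mapDomain_comp, Function.comp_def, shelfFaceTuple_succ_cons hfix]

theorem shelfD_mapDomain_cons (hfix : ∀ b, op a b = a) (x : (Fin (n+1) → S) →₀ k) :
    shelfD k op (n+1) (Finsupp.mapDomain (Fin.cons a) x) =
      x - Finsupp.mapDomain (Fin.cons a) (shelfD k op n x) := by
  rw [shelfD_apply, Fin.sum_univ_succ, shelfD_apply, Finsupp.mapDomain_finsetSum]
  simp only [mapDomain_shelfFaceTuple_zero_cons, mapDomain_shelfFaceTuple_succ_cons hfix,
    Finsupp.mapDomain_smul, Fin.val_zero, pow_zero, one_smul, Fin.val_succ, pow_succ, mul_neg_one,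
    neg_smul, Finset.sum_neg_distrib, sub_eq_add_neg]

end ContractingHomotopy

theorem shelf_complex_acyclic_of_fixed_element_general
    (op : S → S → S)
    (a : S) (hfix : ∀ b : S, op a b = a) :
    ∀ (n : ℕ) (x : (Fin (n+1) → S) →₀ k), shelfD k op n x = 0 →
      ∃ y : (Fin (n+2) → S) →₀ k, shelfD k op (n+1) y = x := by
  intro n x hx
  refine ⟨Finsupp.mapDomain (Fin.cons a) x, ?_⟩
  rw [shelfD_mapDomain_cons hfix, hx, Finsupp.mapDomain_zero, sub_zero]

/-- if a shelf `(S, ◁)` has an element `a` with `a ◁ b = a` for all `b`,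
then the one-term distributive complex is acyclic in positive degrees. -/
theorem shelf_complex_acyclic_of_fixed_element
    (op : S → S → S)
    (selfdistr : ∀ a b c : S, op (op a b) c = op (op a c) (op b c))
    (a : S) (hfix : ∀ b : S, op a b = a) :
    ∀ (n : ℕ) (x : (Fin (n+1) → S) →₀ k), shelfD k op n x = 0 →
      ∃ y : (Fin (n+2) → S) →₀ k, shelfD k op (n+1) y = x :=
  shelf_complex_acyclic_of_fixed_element_general op a hfix
end
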